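/- arXiv:math/0609552 — 3 statements merged into one kernel-verified Lean document; each statement's English description precedes it below -/
import Mathlib

section
/- If 𝒜 and 𝓑 are reduced inverse automata over Ã such that L(𝒜)ρ = L(𝓑)ρ, then 𝒜 and 𝓑 are isomorphic. -/
open Function

/-- A letter of the symmetrized alphabet Ã: `(a, true)` stands for `a ∈ A` and
`(a, false)` for `a⁻¹ ∈ A⁻¹`. -/
abbrev Ltr (A : Type) := A × Bool

/-- Inversion of letters of Ã. -/
def Ltr.inv {A : Type} (x : Ltr A) : Ltr A := (x.1, !x.2)

/-- The inverse `u⁻¹` of a word `u` over Ã. -/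
def wordInv {A : Type} (w : List (Ltr A)) : List (Ltr A) := (w.map Ltr.inv).reverse

/-- A word over Ã is reduced iff it has no factor of the form `a a⁻¹` or `a⁻¹ a`. -/
def IsReducedWord {A : Type} (w : List (Ltr A)) : Prop :=
  ∀ (u v : List (Ltr A)) (a : A) (b : Bool), w ≠ u ++ (a, b) :: (a, !b) :: v

/-- An automaton over the symmetrized alphabet Ã, with a bundled state type `Q`,
an initial state `q0` and a set `E` of transitions. -/
structure Autom (A : Type) : Type 1 where
  Q : Type
  q0 : Q
  E : Set (Q × Ltr A × Q)

namespace Autom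

variable {A : Type}

/-- Paths using only transitions in the set `T`. -/
inductive PathOn (M : Autom A) (T : Set (M.Q × Ltr A × M.Q)) :
    M.Q → List (Ltr A) → M.Q → Prop
  | nil (q : M.Q) : PathOn M T q [] q
  | cons {p q r : M.Q} {a : Ltr A} {w : List (Ltr A)} :
      (p, a, q) ∈ T → PathOn M T q w r → PathOn M T p (a :: w) r

/-- `M.Path p u q` : the word `u` labels a path from state `p` to state `q` in `M`. -/
def Path (M : Autom A) : M.Q → List (Ltr A) → M.Q → Prop := M.PathOn M.E

/-- The language L(𝒜) of words labeling a path from `q0` to `q0`. -/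
def lang (M : Autom A) : Set (List (Ltr A)) := {w | M.Path M.q0 w M.q0}

/-- The set L(𝒜)ρ of reductions (in the free group `F(A)`) of words of L(𝒜). -/
def langRho (M : Autom A) : Set (FreeGroup A) := FreeGroup.mk '' M.lang

/-- Dual automaton: `(p,a,q)` is an edge iff `(q,a⁻¹,p)` is one. -/
def Dual (M : Autom A) : Prop := ∀ p a q, (p, a, q) ∈ M.E ↔ (q, Ltr.inv a, p) ∈ M.E

/-- Deterministic automaton. -/
def Deterministic (M : Autom A) : Prop :=
  ∀ p a q q', (p, a, q) ∈ M.E → (p, a, q') ∈ M.E → q = q'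

/-- Trim automaton: every state lies on a path from `q0` to `q0`. -/
def Trim (M : Autom A) : Prop := ∀ q, ∃ u v, M.Path M.q0 u q ∧ M.Path q v M.q0

/-- Inverse automaton: deterministic, trim and dual. -/
def IsInv (M : Autom A) : Prop := M.Deterministic ∧ M.Trim ∧ M.Dual

/-- Reduced automaton: every state lies on a path from `q0` to `q0` labeled by
a reduced word. -/
def IsRed (M : Autom A) : Prop :=
  ∀ q, ∃ u v, IsReducedWord (u ++ v) ∧ M.Path M.q0 u q ∧ M.Path q v M.q0

/-- Homomorphisms of automata. -/
def IsHom (M N : Autom A) (φ : M.Q → N.Q) : Prop :=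
  φ M.q0 = N.q0 ∧ ∀ p a q, (p, a, q) ∈ M.E → (φ p, a, φ q) ∈ N.E

/-- Isomorphism of automata. -/
def Isomorphic (M N : Autom A) : Prop :=
  ∃ φ : M.Q ≃ N.Q, M.IsHom N φ ∧ N.IsHom M φ.symm

/-- `N` is (isomorphic to) the automaton obtained from `M` by identifying the two
states `p` and `q`. -/
def IsIdentification (M : Autom A) (p q : M.Q) (N : Autom A) : Prop :=
  ∃ φ : M.Q → N.Q,
    Surjective φ ∧ φ M.q0 = N.q0 ∧
    (∀ x y, φ x = φ y ↔ x = y ∨ (x = p ∧ y = q) ∨ (x = q ∧ y = p)) ∧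
    (∀ e : N.Q × Ltr A × N.Q, e ∈ N.E ↔ ∃ e' ∈ M.E, e = (φ e'.1, e'.2.1, φ e'.2.2))

/-- `N` is (isomorphic to) the automaton obtained from `M` by deleting the state `q`
and all transitions involving it. -/
def IsDeletion (M : Autom A) (q : M.Q) (N : Autom A) : Prop :=
  ∃ φ : N.Q → M.Q,
    Injective φ ∧ Set.range φ = {x | x ≠ q} ∧ φ N.q0 = M.q0 ∧
    (∀ e : N.Q × Ltr A × N.Q, e ∈ N.E ↔ (φ e.1, e.2.1, φ e.2.2) ∈ M.E)

/-- Elementary reduction of type 1. -/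
def Red1 (M N : Autom A) : Prop :=
  ∃ p q r a, p ≠ q ∧ (r, a, p) ∈ M.E ∧ (r, a, q) ∈ M.E ∧ M.IsIdentification p q N

/-- Elementary reduction of type 2. -/
def Red2 (M N : Autom A) : Prop :=
  ∃ (p q : M.Q) (a : Ltr A), q ≠ M.q0 ∧ (p, a, q) ∈ M.E ∧ (q, Ltr.inv a, p) ∈ M.E ∧
    (∀ e ∈ M.E, e.1 = q ∨ e.2.2 = q → e = (p, a, q) ∨ e = (q, Ltr.inv a, p)) ∧
    M.IsDeletion q N

/-- `N` is (isomorphic to) the reduction `Mρ` of `M`: perform elementary reductions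
of type 1 until the automaton is deterministic, then elementary reductions of type 2
until none is possible. -/
def ReductionOf (M N : Autom A) : Prop :=
  ∃ M₁, Relation.ReflTransGen Red1 M M₁ ∧ M₁.Deterministic ∧
    Relation.ReflTransGen Red2 M₁ N ∧ ∀ N', ¬ Red2 N N'

/-- `N` is (isomorphic to) the expansion of `M` by `(p, w, q)`: a new path labeled `w`
from `p` to `q` (together with its inverse path) whose intermediate states are new. -/
def IsExpansion (M : Autom A) (p : M.Q) (w : List (Ltr A)) (q : M.Q) (N : Autom A) : Prop :=
  w ≠ [] ∧
  ∃ (φ : M.Q → N.Q) (c : Fin (w.length + 1) → N.Q),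
    Injective φ ∧ φ M.q0 = N.q0 ∧ c 0 = φ p ∧ c (Fin.last w.length) = φ q ∧
    (∀ i : Fin (w.length + 1), 0 < (i : ℕ) → (i : ℕ) < w.length → c i ∉ Set.range φ) ∧
    (∀ i j : Fin (w.length + 1), 0 < (i : ℕ) → (i : ℕ) < w.length → c i = c j → i = j) ∧
    (∀ x : N.Q, (∃ y, φ y = x) ∨ ∃ i, c i = x) ∧
    (∀ e : N.Q × Ltr A × N.Q, e ∈ N.E ↔
      ((∃ e' ∈ M.E, e = (φ e'.1, e'.2.1, φ e'.2.2)) ∨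
        ∃ i : Fin w.length,
          e = (c i.castSucc, w.get i, c i.succ) ∨
          e = (c i.succ, Ltr.inv (w.get i), c i.castSucc)))

/-- `M →exp^{(p,w,q)} N` : `N` is (isomorphic to) the reduction of the expansion
of `M` by `(p,w,q)`. -/
def ExpStep (M : Autom A) (p : M.Q) (w : List (Ltr A)) (q : M.Q) (N : Autom A) : Prop :=
  ∃ N' N'', M.IsExpansion p w q N' ∧ ReductionOf N' N'' ∧ Isomorphic N'' N

/-- `M →re^{(p,w,q)} N` : a reduced expansion, i.e. an expansion-then-reduction in which
`M` embeds in `N`. -/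
def REStep (M : Autom A) (p : M.Q) (w : List (Ltr A)) (q : M.Q) (N : Autom A) : Prop :=
  M.ExpStep p w q N ∧ ∃ ψ : M.Q → N.Q, Injective ψ ∧ M.IsHom N ψ

/-- `M →e^{w} N` : an e-step, i.e. `M →exp^{(q0,w,q0)} N`. -/
def EStep (M : Autom A) (w : List (Ltr A)) (N : Autom A) : Prop :=
  M.ExpStep M.q0 w M.q0 N

/-- `M →i^{p=q} N` : an i-step; `N` is (isomorphic to) the reduction of the automaton
obtained from `M` by identifying the distinct states `p` and `q`. -/
def IStep (M : Autom A) (p q : M.Q) (N : Autom A) : Prop :=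
  p ≠ q ∧ ∃ N' N'', M.IsIdentification p q N' ∧ ReductionOf N' N'' ∧ Isomorphic N'' N

/-- i-step, allowing `p = q` (in which case nothing happens). -/
def IStep' (M : Autom A) (p q : M.Q) (N : Autom A) : Prop :=
  (p = q ∧ M.Isomorphic N) ∨ M.IStep p q N

/-- `M →i N` : some i-step applies. -/
def IStepAny (M N : Autom A) : Prop := ∃ p q, M.IStep p q N

/-- Some reduced expansion (by a nonempty reduced word) applies. -/
def REStepAny (M N : Autom A) : Prop :=
  ∃ p w q, IsReducedWord w ∧ M.REStep p w q N

/-- `M` is (isomorphic to) `Γ_A(H)` : a reduced inverse automaton with `L(M)ρ = H`. -/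
def Represents (M : Autom A) (H : Subgroup (FreeGroup A)) : Prop :=
  M.IsInv ∧ M.IsRed ∧ M.langRho = ↑H

/-- The `q0`-diameter of an automaton: the maximum over all states `q` of the minimal
length of a reduced word labeling a path from `q0` to `q`. -/
noncomputable def diam (M : Autom A) : ℕ :=
  ⨆ q : M.Q, sInf {n | ∃ u, IsReducedWord u ∧ u.length = n ∧ M.Path M.q0 u q}

end Autom

/-- `S` is a basis of the subgroup `H`: `S` generates `H` and freely so. -/
def IsFreeBasis {G : Type} [Group G] (S : Set G) (H : Subgroup G) : Prop :=
  Subgroup.closure S = H ∧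
    Injective (FreeGroup.lift (Subtype.val : S → G) : FreeGroup S →* G)

/-- `H ≤ff K` : `H` is a free factor of `K`. -/
def FreeFactor {G : Type} [Group G] (H K : Subgroup G) : Prop :=
  ∃ B C : Set G, IsFreeBasis B H ∧ IsFreeBasis C K ∧ B ⊆ C

/-- The rank of a subgroup: the cardinality of a basis (the common value of
the cardinalities of all bases, when `H` is a finite-rank free group). -/
noncomputable def rk {G : Type} [Group G] (H : Subgroup G) : ℕ :=
  sInf {n | ∃ S : Set G, IsFreeBasis S H ∧ S.ncard = n}

/-- `L` is a graphical free factor of `K` with respect to `A`: `Γ_A(L)` embeds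
in `Γ_A(K)`. -/
def GraphicalFF {A : Type} (L K : Subgroup (FreeGroup A)) : Prop :=
  L ≤ K ∧ ∃ ML MK : Autom A, ML.Represents L ∧ MK.Represents K ∧
    ∃ ψ : ML.Q → MK.Q, Injective ψ ∧ ML.IsHom MK ψ

/-- A step (i-step or reduced expansion) from `M` to `N` of cost `c`. -/
def StepCost {A : Type} (M N : Autom A) (c : ℕ) : Prop :=
  (c = 0 ∧ Autom.IStepAny M N) ∨
  (∃ p w q, IsReducedWord w ∧ w.length = c ∧ M.REStep p w q N)

/-- The well-order `≺` on cost sequences. -/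
def costLT (k l : List ℕ) : Prop :=
  k.length < l.length ∨
  (k.length = l.length ∧ k.sum < l.sum) ∨
  (k.length = l.length ∧ k.sum = l.sum ∧ List.Lex (· < ·) k l)

section AuxProof

open FreeGroup

attribute [local instance] Classical.decEq

variable {A : Type}

namespace Autom

theorem pathOn_append {M : Autom A} {T : Set (M.Q × Ltr A × M.Q)} {p q r : M.Q}
    {u v : List (Ltr A)} (h1 : M.PathOn T p u q) (h2 : M.PathOn T q v r) :
    M.PathOn T p (u ++ v) r := by
  induction h1 with
  | nil => exact h2
  | cons he _ ih => exact .cons he (ih h2)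

theorem pathOn_split {M : Autom A} {T : Set (M.Q × Ltr A × M.Q)} {p r : M.Q}
    {u v : List (Ltr A)} (h : M.PathOn T p (u ++ v) r) :
    ∃ q, M.PathOn T p u q ∧ M.PathOn T q v r := by
  induction u generalizing p with
  | nil => exact ⟨p, .nil p, h⟩
  | cons a u ih =>
    cases h with
    | cons he h' =>
      obtain ⟨q, h1, h2⟩ := ih h'
      exact ⟨q, .cons he h1, h2⟩

theorem path_unique {M : Autom A} (hdet : M.Deterministic) {p : M.Q} {u : List (Ltr A)}
    {q q' : M.Q} (h1 : M.Path p u q) (h2 : M.Path p u q') : q = q' := by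
  induction u generalizing p with
  | nil => cases h1; cases h2; rfl
  | cons a u ih =>
    cases h1 with
    | cons he1 h1 =>
      cases h2 with
      | cons he2 h2 =>
        obtain rfl := hdet _ _ _ _ he1 he2
        exact ih h1 h2

theorem path_rev {M : Autom A} (hdual : M.Dual) {p : M.Q} {u : List (Ltr A)} {q : M.Q}
    (h : M.Path p u q) : M.Path q (wordInv u) p := by
  induction h with
  | nil q => exact .nil q
  | @cons p' q' r' a w he _ ih =>
    have hw : wordInv (a :: w) = wordInv w ++ [Ltr.inv a] := by simp [wordInv]
    rw [hw]
    exact pathOn_append ih (.cons ((hdual _ _ _).1 he) (.nil _))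

theorem path_red_step {M : Autom A} (hdet : M.Deterministic) (hdual : M.Dual)
    {p q : M.Q} {x y : List (Ltr A)} {c : A} {b : Bool}
    (h : M.Path p (x ++ (c, b) :: (c, !b) :: y) q) : M.Path p (x ++ y) q := by
  obtain ⟨r, h1, h2⟩ := pathOn_split h
  cases h2 with
  | cons he1 h2 =>
    cases h2 with
    | cons he2 h2 =>
      have hback : _ ∈ M.E := (hdual _ _ _).1 he1
      have : Ltr.inv (c, b) = ((c, !b) : Ltr A) := rfl
      rw [this] at hback
      obtain rfl := hdet _ _ _ _ he2 hback
      exact pathOn_append h1 h2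

theorem path_red {M : Autom A} (hdet : M.Deterministic) (hdual : M.Dual)
    {p q : M.Q} {u u' : List (Ltr A)} (hr : FreeGroup.Red u u') (h : M.Path p u q) :
    M.Path p u' q := by
  induction hr with
  | refl => exact h
  | tail _ step ih =>
    cases step with
    | not => exact path_red_step hdet hdual ih

theorem path_reduce {M : Autom A} (hdet : M.Deterministic) (hdual : M.Dual)
    {p q : M.Q} {u : List (Ltr A)} (h : M.Path p u q) :
    M.Path p (FreeGroup.reduce u) q :=
  path_red hdet hdual FreeGroup.reduce.red h

end Autom

theorem IsReducedWord.reduce_eq {w : List (Ltr A)} (h : IsReducedWord w) :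
    FreeGroup.reduce w = w := by
  rcases (FreeGroup.reduce.red (L := w)).cases_head with h' | ⟨b, step, _⟩
  · exact h'.symm
  · cases step with
    | @not L₁ L₂ x bb => exact absurd rfl (h L₁ L₂ x bb)

theorem IsReducedWord.prefix {u v : List (Ltr A)} (h : IsReducedWord (u ++ v)) :
    IsReducedWord u := by
  intro x y a b hu
  exact h x (y ++ v) a b (by rw [hu]; simp)

theorem wordInv_eq_invRev (w : List (Ltr A)) : wordInv w = FreeGroup.invRev w := rfl

namespace Autom

theorem reduce_mem_lang {N : Autom A} (hdet : N.Deterministic) (hdual : N.Dual)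
    {g : FreeGroup A} (hg : g ∈ N.langRho) :
    N.Path N.q0 g.toWord N.q0 := by
  obtain ⟨w, hw, rfl⟩ := hg
  rw [FreeGroup.toWord_mk]
  exact path_reduce hdet hdual hw

theorem readable {M N : Autom A} (hMred : M.IsRed) (hNdet : N.Deterministic) (hNdual : N.Dual)
    (hsub : M.langRho ⊆ N.langRho) {q : M.Q} {u : List (Ltr A)}
    (hu : IsReducedWord u) (hpath : M.Path M.q0 u q) :
    ∃ t, N.Path N.q0 u t := by
  obtain ⟨u₁, v₁, hred₁, hp₁, hq₁⟩ := hMred q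
  have hw : M.Path M.q0 (u ++ v₁) M.q0 := pathOn_append hpath hq₁
  have hz : N.Path N.q0 (FreeGroup.reduce (u ++ v₁)) N.q0 := by
    have := reduce_mem_lang hNdet hNdual (hsub ⟨_, hw, rfl⟩)
    rwa [FreeGroup.toWord_mk] at this
  have hloop : N.Path N.q0 (u₁ ++ v₁) N.q0 := by
    have h1 : M.Path M.q0 (u₁ ++ v₁) M.q0 := pathOn_append hp₁ hq₁
    have := reduce_mem_lang hNdet hNdual (hsub ⟨_, h1, rfl⟩)
    rwa [FreeGroup.toWord_mk, hred₁.reduce_eq] at this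
  obtain ⟨s, _, hs2⟩ := pathOn_split hloop
  have hcomb : N.Path N.q0 (FreeGroup.reduce (u ++ v₁) ++ wordInv v₁) s :=
    pathOn_append hz (path_rev hNdual hs2)
  have hkey : FreeGroup.reduce (FreeGroup.reduce (u ++ v₁) ++ wordInv v₁) = u := by
    have h1 : FreeGroup.mk (FreeGroup.reduce (u ++ v₁) ++ wordInv v₁) = FreeGroup.mk u := by
      rw [← FreeGroup.mul_mk, wordInv_eq_invRev, ← FreeGroup.inv_mk,
        ← FreeGroup.toWord_mk (L₁ := u ++ v₁), FreeGroup.mk_toWord, ← FreeGroup.mul_mk]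
      group
    have := congrArg FreeGroup.toWord h1
    rwa [FreeGroup.toWord_mk, FreeGroup.toWord_mk, hu.reduce_eq] at this
  refine ⟨s, ?_⟩
  have := path_reduce hNdet hNdual hcomb
  rwa [hkey] at this

theorem coherence {M N : Autom A} (hMdual : M.Dual) (hNdet : N.Deterministic) (hNdual : N.Dual)
    (hsub : M.langRho ⊆ N.langRho)
    {q : M.Q} {u u' : List (Ltr A)} (hu : IsReducedWord u) (hu' : IsReducedWord u')
    (h1 : M.Path M.q0 u q) (h2 : M.Path M.q0 u' q)
    {t t' : N.Q} (h3 : N.Path N.q0 u t) (h4 : N.Path N.q0 u' t') : t = t' := by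
  have hloop : M.Path M.q0 (u ++ wordInv u') M.q0 :=
    pathOn_append h1 (path_rev hMdual h2)
  have hz : N.Path N.q0 (FreeGroup.reduce (u ++ wordInv u')) N.q0 := by
    have := reduce_mem_lang hNdet hNdual (hsub ⟨_, hloop, rfl⟩)
    rwa [FreeGroup.toWord_mk] at this
  have hcomb : N.Path N.q0 (FreeGroup.reduce (u ++ wordInv u') ++ u') t' :=
    pathOn_append hz h4
  have hkey : FreeGroup.reduce (FreeGroup.reduce (u ++ wordInv u') ++ u') = u := by
    have hmk : FreeGroup.mk (FreeGroup.reduce (u ++ wordInv u') ++ u') = FreeGroup.mk u := by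
      rw [← FreeGroup.mul_mk, ← FreeGroup.toWord_mk (L₁ := u ++ wordInv u'), FreeGroup.mk_toWord,
        ← FreeGroup.mul_mk, wordInv_eq_invRev, ← FreeGroup.inv_mk]
      group
    have := congrArg FreeGroup.toWord hmk
    rwa [FreeGroup.toWord_mk, FreeGroup.toWord_mk, hu.reduce_eq] at this
  have h5 : N.Path N.q0 u t' := by
    have := path_reduce hNdet hNdual hcomb
    rwa [hkey] at this
  exact path_unique hNdet h3 h5

theorem not_reduced_snoc {u : List (Ltr A)} {a : Ltr A}
    (hu : IsReducedWord u) (hna : ¬ IsReducedWord (u ++ [a])) :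
    ∃ u₀, u = u₀ ++ [Ltr.inv a] := by
  simp only [IsReducedWord, not_forall, not_not] at hna
  obtain ⟨x, y, c, b, heq⟩ := hna
  rcases List.eq_nil_or_concat y with rfl | ⟨y', d, rfl⟩
  · have heq2 : u ++ [a] = (x ++ [((c, b) : Ltr A)]) ++ [((c, !b) : Ltr A)] := by
      rw [heq]; simp
    obtain ⟨h1, h2⟩ := List.append_inj' heq2 rfl
    obtain rfl : a = ((c, !b) : Ltr A) := by simpa using h2
    refine ⟨x, ?_⟩
    rw [h1]
    simp [Ltr.inv]
  · have heq2 : u ++ [a] = (x ++ (c, b) :: (c, !b) :: y') ++ [d] := by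
      rw [heq]; simp
    obtain ⟨h1, _⟩ := List.append_inj' heq2 rfl
    exact absurd h1 (hu x y' c b)

end Autom


namespace Autom

theorem hom_step {A : Type} {M N : Autom A} (hMdet : M.Deterministic) (hMdual : M.Dual)
    (hMred : M.IsRed) (hNdet : N.Deterministic) (hNdual : N.Dual)
    (hsub : M.langRho ⊆ N.langRho)
    {p q : M.Q} {a : Ltr A} (he : (p, a, q) ∈ M.E)
    {u uq : List (Ltr A)} (hu : IsReducedWord u) (hp : M.Path M.q0 u p)
    (huq : IsReducedWord uq) (hq : M.Path M.q0 uq q)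
    {t tq : N.Q} (ht : N.Path N.q0 u t) (htq : N.Path N.q0 uq tq) :
    (t, a, tq) ∈ N.E := by
  by_cases hcase : IsReducedWord (u ++ [a])
  · have hpath : M.Path M.q0 (u ++ [a]) q := pathOn_append hp (.cons he (.nil _))
    obtain ⟨t', ht'⟩ := readable hMred hNdet hNdual hsub hcase hpath
    obtain ⟨s, hs1, hs2⟩ := pathOn_split ht'
    obtain rfl := path_unique hNdet hs1 ht
    cases hs2 with
    | cons he2 h2 =>
      cases h2
      have hcoh : t' = tq := coherence hMdual hNdet hNdual hsub hcase huq hpath hq ht' htq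
      exact hcoh ▸ he2
  · obtain ⟨u₀, rfl⟩ := not_reduced_snoc hu hcase
    obtain ⟨r, hr1, hr2⟩ := pathOn_split hp
    cases hr2 with
    | cons hre h2 =>
      cases h2
      have hra : (p, a, r) ∈ M.E := by
        have h' := (hMdual _ _ _).1 hre
        have hinv : Ltr.inv (Ltr.inv a) = a := by cases a; simp [Ltr.inv]
        rwa [hinv] at h'
      obtain rfl := hMdet _ _ _ _ hra he
      obtain ⟨s, hs1, hs2⟩ := pathOn_split ht
      cases hs2 with
      | cons hse h2 =>
        cases h2
        have hta : (t, a, s) ∈ N.E := by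
          have h' := (hNdual _ _ _).1 hse
          have hinv : Ltr.inv (Ltr.inv a) = a := by cases a; simp [Ltr.inv]
          rwa [hinv] at h'
        have hcoh : s = tq :=
          coherence hMdual hNdet hNdual hsub hu.prefix huq hr1 hq hs1 htq
        exact hcoh ▸ hta

end Autom

theorem reduced_inverse_unique'
    {A : Type} (M N : Autom A)
    (hMinv : M.IsInv) (hMred : M.IsRed) (hNinv : N.IsInv) (hNred : N.IsRed)
    (h : M.langRho = N.langRho) :
    M.Isomorphic N := by
  obtain ⟨hMdet, hMtrim, hMdual⟩ := hMinv
  obtain ⟨hNdet, hNtrim, hNdual⟩ := hNinv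
  have hMN : M.langRho ⊆ N.langRho := h.le
  have hNM : N.langRho ⊆ M.langRho := h.ge
  have hMw : ∀ q : M.Q, ∃ u, IsReducedWord u ∧ M.Path M.q0 u q := fun q => by
    obtain ⟨u, v, hr, h1, _⟩ := hMred q
    exact ⟨u, hr.prefix, h1⟩
  choose uM huM hpM using hMw
  have hNw : ∀ t : N.Q, ∃ u, IsReducedWord u ∧ N.Path N.q0 u t := fun t => by
    obtain ⟨u, v, hr, h1, _⟩ := hNred t
    exact ⟨u, hr.prefix, h1⟩
  choose uN huN hpN using hNw
  choose φ hφ using fun q : M.Q =>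
    Autom.readable hMred hNdet hNdual hMN (huM q) (hpM q)
  choose ψ hψ using fun t : N.Q =>
    Autom.readable hNred hMdet hMdual hNM (huN t) (hpN t)
  have hLI : ∀ q, ψ (φ q) = q := fun q =>
    (Autom.coherence hNdual hMdet hMdual hNM (huM q) (huN (φ q)) (hφ q) (hpN (φ q))
      (hpM q) (hψ (φ q))).symm
  have hRI : ∀ t, φ (ψ t) = t := fun t =>
    (Autom.coherence hMdual hNdet hNdual hMN (huN t) (huM (ψ t)) (hψ t) (hpM (ψ t))
      (hpN t) (hφ (ψ t))).symm
  have hnil : IsReducedWord ([] : List (Ltr A)) := fun x y a b hh => by simp at hh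
  have hφ0 : φ M.q0 = N.q0 :=
    Autom.coherence hMdual hNdet hNdual hMN (huM M.q0) hnil (hpM M.q0) (.nil _)
      (hφ M.q0) (.nil _)
  have hψ0 : ψ N.q0 = M.q0 :=
    Autom.coherence hNdual hMdet hMdual hNM (huN N.q0) hnil (hpN N.q0) (.nil _)
      (hψ N.q0) (.nil _)
  refine ⟨⟨φ, ψ, hLI, hRI⟩, ⟨hφ0, ?_⟩, ⟨hψ0, ?_⟩⟩
  · intro p a q hpq
    exact Autom.hom_step hMdet hMdual hMred hNdet hNdual hMN hpq (huM p) (hpM p)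
      (huM q) (hpM q) (hφ p) (hφ q)
  · intro p a q hpq
    exact Autom.hom_step hNdet hNdual hNred hMdet hMdual hNM hpq (huN p) (hpN p)
      (huN q) (hpN q) (hψ p) (hψ q)

end AuxProof


/-- Proposition 1.3: two reduced inverse automata with the same `L(·)ρ` are isomorphic. -/
theorem reduced_inverse_unique
    {A : Type} (M N : Autom A)
    (hMinv : M.IsInv) (hMred : M.IsRed) (hNinv : N.IsInv) (hNred : N.IsRed)
    (h : M.langRho = N.langRho) :
    M.Isomorphic N :=
  reduced_inverse_unique' M N hMinv hMred hNinv hNred h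
end

section
/- Let 𝒜 be an inverse automaton over Ã, let q ≠ q₀ and p be states and a ∈ Ã a letter such that the only transitions of 𝒜 involving q are (p,a,q) and (q,a⁻¹,p), and let 𝓑 be obtained from 𝒜 by deleting the state q and the transitions involving it (an elementary reduction of type 2). Then 𝓑 is an inverse automaton and L(𝒜)ρ = L(𝓑)ρ. -/
open Function

section Red2Helpers

open Autom

private lemma mk_cons_cancel {A : Type} (x : Ltr A) (L : List (Ltr A)) :
    FreeGroup.mk (x :: Ltr.inv x :: L) = FreeGroup.mk L := by
  rw [← FreeGroup.quot_mk_eq_mk, ← FreeGroup.quot_mk_eq_mk]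
  exact Quot.sound (show FreeGroup.Red.Step ((x.1, x.2) :: (x.1, !x.2) :: L) L from
    FreeGroup.Red.Step.cons_not)

private lemma mk_cons {A : Type} (x : Ltr A) (L : List (Ltr A)) :
    FreeGroup.mk (x :: L) = FreeGroup.mk [x] * FreeGroup.mk L := by
  rw [FreeGroup.mul_mk]; rfl

private lemma no_new_path {A : Type} {M : Autom A} {p q : M.Q} {a : Ltr A}
    (honly : ∀ e ∈ M.E, e.1 = q ∨ e.2.2 = q → e = (p, a, q) ∨ e = (q, Ltr.inv a, p))
    (hpq : p = q) {s t : M.Q} {w : List (Ltr A)} (h : M.Path s w t) (ht : t = q) :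
    s = q := by
  induction h with
  | nil => exact ht
  | @cons p₁ q₁ r₁ c w₁ he h2 ih =>
    have hq₁ : q₁ = q := ih ht
    subst hq₁
    rcases honly _ he (Or.inr rfl) with h1 | h1
    · exact (congrArg Prod.fst h1).trans hpq
    · exact congrArg Prod.fst h1

private lemma surgery {A : Type} {M : Autom A} {p q : M.Q} {a : Ltr A}
    (honly : ∀ e ∈ M.E, e.1 = q ∨ e.2.2 = q → e = (p, a, q) ∨ e = (q, Ltr.inv a, p))
    (hpq : p ≠ q) :
    ∀ (n : ℕ) ⦃s t : M.Q⦄ ⦃w : List (Ltr A)⦄, w.length ≤ n → M.Path s w t →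
      s ≠ q → t ≠ q →
      ∃ w', FreeGroup.mk w' = FreeGroup.mk w ∧
        M.PathOn {e | e ∈ M.E ∧ e.1 ≠ q ∧ e.2.2 ≠ q} s w' t := by
  intro n
  induction n with
  | zero =>
    intro s t w hlen h hs ht
    cases h with
    | nil => exact ⟨[], rfl, .nil _⟩
    | cons he h2 => simp at hlen
  | succ n ih =>
    intro s t w hlen h hs ht
    cases h with
    | nil => exact ⟨[], rfl, .nil _⟩
    | @cons _ m _ c w₁ he h2 =>
      by_cases hm : m = q
      · subst hm
        rcases honly _ he (Or.inr rfl) with h1 | h1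
        · obtain ⟨hsp, hca⟩ : s = p ∧ c = a := by
            simpa [Prod.ext_iff] using h1
          cases h2 with
          | nil => exact absurd rfl ht
          | @cons _ m2 _ c2 w₂ he2 h3 =>
            rcases honly _ he2 (Or.inl rfl) with h4 | h4
            · exact absurd (congrArg Prod.fst h4).symm hpq
            · obtain ⟨hc2, hm2⟩ : c2 = Ltr.inv a ∧ m2 = p := by
                simpa [Prod.ext_iff] using h4
              rw [hm2] at h3
              obtain ⟨w', hw', hp'⟩ := ih (s := p) (t := t) (w := w₂)
                (by simp at hlen; omega) h3 hpq ht
              refine ⟨w', ?_, ?_⟩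
              · rw [hca, hc2, mk_cons_cancel]; exact hw'
              · rw [hsp]; exact hp'
        · exact absurd (congrArg Prod.fst h1) hs
      · obtain ⟨w'', hw'', hp''⟩ := ih (by simp at hlen; omega) h2 hm ht
        exact ⟨c :: w'', by rw [mk_cons c w'', mk_cons c w₁, hw''],
          .cons (by exact ⟨he, hs, hm⟩) hp''⟩

private lemma lift_path {A : Type} {M N : Autom A} {q : M.Q} {φ : N.Q → M.Q}
    (hinj : Function.Injective φ) (hr : Set.range φ = {x | x ≠ q})
    (hE : ∀ e : N.Q × Ltr A × N.Q, e ∈ N.E ↔ (φ e.1, e.2.1, φ e.2.2) ∈ M.E)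
    {s t : M.Q} {w : List (Ltr A)}
    (h : M.PathOn {e | e ∈ M.E ∧ e.1 ≠ q ∧ e.2.2 ≠ q} s w t) :
    ∀ s' t', φ s' = s → φ t' = t → N.Path s' w t' := by
  induction h with
  | nil =>
    intro s' t' hs' ht'
    obtain rfl : s' = t' := hinj (hs'.trans ht'.symm)
    exact .nil _
  | @cons p₁ q₁ r₁ c w₁ he h2 ih =>
    intro s' t' hs' ht'
    have hq₁ : q₁ ∈ Set.range φ := by rw [hr]; exact he.2.2
    obtain ⟨m', rfl⟩ := hq₁
    exact .cons ((hE (s', c, m')).2 (by rw [hs']; exact he.1)) (ih m' t' rfl ht')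

private lemma map_path {A : Type} {M N : Autom A} {φ : N.Q → M.Q}
    (hE : ∀ e : N.Q × Ltr A × N.Q, e ∈ N.E ↔ (φ e.1, e.2.1, φ e.2.2) ∈ M.E)
    {s t : N.Q} {w : List (Ltr A)} (h : N.Path s w t) : M.Path (φ s) w (φ t) := by
  induction h with
  | nil => exact .nil _
  | cons he _ ih => exact .cons ((hE _).1 he) ih

end Red2Helpers

/-- Fact 1.6: an elementary reduction of type 2 yields an inverse automaton and
does not change `L(·)ρ`. -/
theorem red2_inverse_and_langRho_eq
    {A : Type} (M : Autom A) (hinv : M.IsInv)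
    (p q : M.Q) (a : Ltr A) (hq0 : q ≠ M.q0)
    (hpa : (p, a, q) ∈ M.E) (hqa : (q, Ltr.inv a, p) ∈ M.E)
    (honly : ∀ e ∈ M.E, e.1 = q ∨ e.2.2 = q → e = (p, a, q) ∨ e = (q, Ltr.inv a, p))
    (N : Autom A) (hN : M.IsDeletion q N) :
    N.IsInv ∧ M.langRho = N.langRho := by
  obtain ⟨hdet, htrim, hdual⟩ := hinv
  obtain ⟨φ, hinj, hr, hq0', hE⟩ := hN
  have hq0q : M.q0 ≠ q := fun h => hq0 h.symm
  have hpq : p ≠ q := by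
    intro h
    obtain ⟨u, v, h1, h2⟩ := htrim q
    exact hq0 (no_new_path honly h h1 rfl).symm
  have hsur := surgery honly hpq
  refine ⟨⟨?_, ?_, ?_⟩, ?_⟩
  · intro x c y y' h1 h2
    exact hinj (hdet _ _ _ _ ((hE _).1 h1) ((hE _).1 h2))
  · intro x
    have hx : φ x ≠ q := by
      have hx0 : φ x ∈ Set.range φ := ⟨x, rfl⟩
      rw [hr] at hx0; exact hx0
    obtain ⟨u, v, h1, h2⟩ := htrim (φ x)
    obtain ⟨u', -, hu⟩ := hsur u.length le_rfl h1 hq0q hx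
    obtain ⟨v', -, hv⟩ := hsur v.length le_rfl h2 hx hq0q
    exact ⟨u', v', lift_path hinj hr hE hu N.q0 x hq0' rfl,
      lift_path hinj hr hE hv x N.q0 rfl hq0'⟩
  · intro x c y
    constructor
    · intro h
      exact (hE _).2 ((hdual _ _ _).1 ((hE _).1 h))
    · intro h
      have h' := (hdual _ _ _).1 ((hE _).1 h)
      have hcc : Ltr.inv (Ltr.inv c) = c := by simp [Ltr.inv]
      rw [hcc] at h'
      exact (hE _).2 h'
  · ext g
    constructor
    · rintro ⟨w, hw, rfl⟩
      obtain ⟨w', hw', hp'⟩ := hsur w.length le_rfl hw hq0q hq0q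
      exact ⟨w', lift_path hinj hr hE hp' N.q0 N.q0 hq0' hq0', hw'⟩
    · rintro ⟨w, hw, rfl⟩
      refine ⟨w, ?_, rfl⟩
      have h' := map_path hE hw
      rwa [hq0'] at h'
end

section
/- Let 𝒜 be a reduced inverse automaton over Ã and let u be a reduced word labeling a path in 𝒜 from state p to state p' and a path from state q to state q', where p ≠ q and p' ≠ q'. Then for every reduced inverse automaton 𝓑, 𝒜 →i^{p=q} 𝓑 if and only if 𝒜 →i^{p'=q'} 𝓑. -/
open Function

/-! Identifying `p` and `q` and then folding until the automaton is deterministic yields the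
quotient of `𝒜` by `Fold p q`, the smallest equivalence relation containing `(p, q)` that is
closed under folding (`r ~ r'`, `r -a→ s`, `r' -a→ t` imply `s ~ t`). Since `u` labels parallel
paths `p → p'` and `q → q'`, and by duality also parallel paths `p' → p` and `q' → q`, the
relations `Fold p q` and `Fold p' q'` contain each other. Hence both identifications fold to the
same deterministic automaton, and the remaining reductions of type 2 are literally the same.
Folding from `p' = q'` terminates although `𝒜` need not be finite: the given reduction from
`p = q` shows that `Fold p q` identifies only finitely many states nontrivially. -/

def offDiagDom {α : Type*} (r : α → α → Prop) : Set α := {x | ∃ y, r x y ∧ x ≠ y}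

theorem Set.Finite.preimage_singleton_of_offDiagDom {α β : Type*} {f : α → β}
    (h : (offDiagDom fun x y => f x = f y).Finite) (b : β) : (f ⁻¹' {b}).Finite := by
  by_cases hs : (f ⁻¹' {b}).Subsingleton
  · exact hs.finite
  obtain ⟨x₁, hx₁, x₂, hx₂, hne⟩ := Set.not_subsingleton_iff.mp hs
  refine h.subset fun x (hx : f x = b) => ?_
  rcases eq_or_ne x x₁ with rfl | hne₁
  · exact ⟨x₂, hx.trans hx₂.symm, hne⟩
  · exact ⟨x₁, hx.trans hx₁.symm, hne₁⟩

theorem Set.Finite.offDiagDom_comp {α β γ : Type*} {ψ : α → β} {φ : β → γ} {P Q : β}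
    (h : (offDiagDom fun x y => ψ x = ψ y).Finite)
    (hφ : ∀ u v, φ u = φ v → u = v ∨ (u = P ∧ v = Q) ∨ (u = Q ∧ v = P)) :
    (offDiagDom fun x y => φ (ψ x) = φ (ψ y)).Finite := by
  refine ((h.union (h.preimage_singleton_of_offDiagDom P)).union
    (h.preimage_singleton_of_offDiagDom Q)).subset ?_
  rintro x ⟨y, hxy, hne⟩
  rcases hφ _ _ hxy with h | ⟨h, -⟩ | ⟨h, -⟩
  exacts [Or.inl (Or.inl ⟨y, h, hne⟩), Or.inl (Or.inr h), Or.inr h]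

theorem Set.ncard_image_lt_of_not_injOn {α β : Type*} {s : Set α} {f : α → β} (hs : s.Finite)
    (hf : ¬ Set.InjOn f s) : (f '' s).ncard < s.ncard :=
  (Set.ncard_image_le hs).lt_of_ne fun h => hf (Set.injOn_of_ncard_image_eq h hs)

namespace Autom

variable {A : Type}

theorem Path.append {M : Autom A} {p q r : M.Q} {u v : List (Ltr A)}
    (h₁ : M.Path p u q) (h₂ : M.Path q v r) : M.Path p (u ++ v) r := by
  induction h₁ with
  | nil => exact h₂
  | cons he _ ih => exact PathOn.cons he (ih h₂)

theorem Path.symm {M : Autom A} (hd : M.Dual) {p q : M.Q} {u : List (Ltr A)}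
    (h : M.Path p u q) : M.Path q (wordInv u) p := by
  induction h with
  | nil => exact PathOn.nil _
  | @cons _ _ _ a w he _ ih =>
    have hw : wordInv (a :: w) = wordInv w ++ [Ltr.inv a] := by
      simp [wordInv]
    rw [hw]
    exact ih.append (PathOn.cons ((hd _ _ _).mp he) (PathOn.nil _))

def FoldClosed (M : Autom A) (r : M.Q → M.Q → Prop) : Prop :=
  ∀ ⦃r₁ r₂ x y : M.Q⦄ ⦃a : Ltr A⦄, r r₁ r₂ → (r₁, a, x) ∈ M.E → (r₂, a, y) ∈ M.E → r x y

theorem FoldClosed.of_paths {M : Autom A} {r : M.Q → M.Q → Prop} (hr : M.FoldClosed r)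
    {u : List (Ltr A)} {x y x' y' : M.Q} (hx : M.Path x u x') (hy : M.Path y u y')
    (h : r x y) : r x' y' := by
  induction u generalizing x y with
  | nil => cases hx; cases hy; exact h
  | cons a w ih =>
    cases hx with
    | cons hex hx' =>
      cases hy with
      | cons hey hy' => exact ih hx' hy' (hr h hex hey)

inductive Fold (M : Autom A) (p q : M.Q) : M.Q → M.Q → Prop
  | base : Fold M p q p q
  | refl (x : M.Q) : Fold M p q x x
  | symm {x y : M.Q} : Fold M p q x y → Fold M p q y x
  | trans {x y z : M.Q} : Fold M p q x y → Fold M p q y z → Fold M p q x z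
  | fold {r r' s t : M.Q} {a : Ltr A} : Fold M p q r r' →
      (r, a, s) ∈ M.E → (r', a, t) ∈ M.E → Fold M p q s t

namespace Fold

variable {M : Autom A} {p q : M.Q}

theorem equivalence : Equivalence (Fold M p q) := ⟨refl, symm, trans⟩

theorem foldClosed : M.FoldClosed (Fold M p q) := fun _ _ _ _ _ => fold

theorem le_of_foldClosed {r : M.Q → M.Q → Prop} (hr : Equivalence r) (hpq : r p q)
    (hc : M.FoldClosed r) : Fold M p q ≤ r := by
  intro x y h
  induction h with
  | base => exact hpq
  | refl x => exact hr.refl x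
  | symm _ ih => exact hr.symm ih
  | trans _ _ ih₁ ih₂ => exact hr.trans ih₁ ih₂
  | fold _ he₁ he₂ ih => exact hc ih he₁ he₂

end Fold

theorem fold_eq_of_paths {M : Autom A} (hd : M.Dual) {u : List (Ltr A)} {p p' q q' : M.Q}
    (h₁ : M.Path p u p') (h₂ : M.Path q u q') : Fold M p q = Fold M p' q' :=
  le_antisymm
    (Fold.le_of_foldClosed Fold.equivalence
      (Fold.foldClosed.of_paths (h₁.symm hd) (h₂.symm hd) Fold.base) Fold.foldClosed)
    (Fold.le_of_foldClosed Fold.equivalence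
      (Fold.foldClosed.of_paths h₁ h₂ Fold.base) Fold.foldClosed)

structure IsQuotientMap (M N : Autom A) (ψ : M.Q → N.Q) : Prop where
  surjective : Surjective ψ
  map_q0 : ψ M.q0 = N.q0
  mem_E_iff : ∀ e : N.Q × Ltr A × N.Q, e ∈ N.E ↔ ∃ e' ∈ M.E, e = (ψ e'.1, e'.2.1, ψ e'.2.2)

namespace IsQuotientMap

variable {M X Y : Autom A} {ψ : M.Q → X.Q}

theorem map_mem_E (hψ : IsQuotientMap M X ψ) {x y : M.Q} {a : Ltr A} (h : (x, a, y) ∈ M.E) :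
    (ψ x, a, ψ y) ∈ X.E :=
  (hψ.mem_E_iff _).mpr ⟨_, h, rfl⟩

theorem comp (hψ : IsQuotientMap M X ψ) {φ : X.Q → Y.Q} (hφ : IsQuotientMap X Y φ) :
    IsQuotientMap M Y (φ ∘ ψ) := by
  refine ⟨hφ.surjective.comp hψ.surjective, by simp [hψ.map_q0, hφ.map_q0], fun e => ?_⟩
  rw [hφ.mem_E_iff]
  constructor
  · rintro ⟨_, he, rfl⟩
    obtain ⟨e', he', rfl⟩ := (hψ.mem_E_iff _).mp he
    exact ⟨e', he', rfl⟩
  · rintro ⟨e', he', rfl⟩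
    exact ⟨_, hψ.map_mem_E he', rfl⟩

theorem isHom {χ : M.Q → Y.Q} (hψ : IsQuotientMap M X ψ) (hχ : IsQuotientMap M Y χ)
    {f : X.Q → Y.Q} (hf : ∀ x, f (ψ x) = χ x) : X.IsHom Y f := by
  refine ⟨by rw [← hψ.map_q0, hf, hχ.map_q0], fun x a y h => ?_⟩
  obtain ⟨e', he', hxy⟩ := (hψ.mem_E_iff _).mp h
  simp only [Prod.mk.injEq] at hxy
  obtain ⟨rfl, rfl, rfl⟩ := hxy
  rw [hf, hf]
  exact hχ.map_mem_E he'

theorem isomorphic {χ : M.Q → Y.Q} (hψ : IsQuotientMap M X ψ) (hχ : IsQuotientMap M Y χ)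
    (hker : ∀ x y, ψ x = ψ y ↔ χ x = χ y) : X.Isomorphic Y := by
  let f : X.Q → Y.Q := fun z => χ (surjInv hψ.surjective z)
  have hf : ∀ x, f (ψ x) = χ x := fun x =>
    (hker _ _).mp (surjInv_eq hψ.surjective (ψ x))
  have hbij : Bijective f := by
    refine ⟨fun z z' h => ?_, fun y => ?_⟩
    · rw [← surjInv_eq hψ.surjective z, ← surjInv_eq hψ.surjective z']
      exact (hker _ _).mpr h
    · obtain ⟨x, rfl⟩ := hχ.surjective y
      exact ⟨ψ x, hf x⟩
  refine ⟨Equiv.ofBijective f hbij, hψ.isHom hχ hf, hχ.isHom hψ fun x => ?_⟩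
  rw [Equiv.symm_apply_eq]
  exact (hf x).symm

end IsQuotientMap

theorem isIdentification_iff {M N : Autom A} {p q : M.Q} :
    M.IsIdentification p q N ↔ ∃ φ : M.Q → N.Q, IsQuotientMap M N φ ∧
      ∀ x y, φ x = φ y ↔ x = y ∨ (x = p ∧ y = q) ∨ (x = q ∧ y = p) :=
  ⟨fun ⟨φ, hs, h0, hker, hE⟩ => ⟨φ, ⟨hs, h0, hE⟩, hker⟩,
    fun ⟨φ, ⟨hs, h0, hE⟩, hker⟩ => ⟨φ, hs, h0, hker, hE⟩⟩

def pairSetoid (M : Autom A) (p q : M.Q) : Setoid M.Q where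
  r x y := x = y ∨ (x = p ∧ y = q) ∨ (x = q ∧ y = p)
  iseqv := by
    refine ⟨fun x => Or.inl rfl, ?_, ?_⟩
    · rintro x y (h | ⟨h₁, h₂⟩ | ⟨h₁, h₂⟩) <;> subst_vars <;> tauto
    · rintro x y z (h | ⟨h₁, h₂⟩ | ⟨h₁, h₂⟩) (h' | ⟨h₁', h₂'⟩ | ⟨h₁', h₂'⟩) <;>
        subst_vars <;> tauto

theorem exists_isIdentification (M : Autom A) (p q : M.Q) : ∃ N, M.IsIdentification p q N :=
  ⟨⟨Quotient (M.pairSetoid p q), Quotient.mk _ M.q0,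
      {e | ∃ e' ∈ M.E, e = (Quotient.mk _ e'.1, e'.2.1, Quotient.mk _ e'.2.2)}⟩,
    Quotient.mk _, Quotient.mk_surjective, rfl, fun _ _ => Quotient.eq, fun _ => Iff.rfl⟩

theorem IsIdentification.of_isomorphic {M X Y : Autom A} {p q : M.Q}
    (h : M.IsIdentification p q X) (hXY : X.Isomorphic Y) : M.IsIdentification p q Y := by
  obtain ⟨φ, hφ, hker⟩ := isIdentification_iff.mp h
  obtain ⟨e, ⟨he0, he⟩, ⟨-, hsymm⟩⟩ := hXY
  have he_quot : IsQuotientMap X Y e := by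
    refine ⟨e.surjective, he0, fun t => ⟨fun ht => ⟨(e.symm t.1, t.2.1, e.symm t.2.2),
      hsymm _ _ _ ht, by simp⟩, ?_⟩⟩
    rintro ⟨t', ht', rfl⟩
    exact he _ _ _ ht'
  exact isIdentification_iff.mpr ⟨e ∘ φ, hφ.comp he_quot, fun x y => by
    rw [comp_apply, comp_apply, e.injective.eq_iff, hker]⟩

theorem exists_isIdentification_red1_chain_of_isomorphic {M X Y Z : Autom A} {p q : M.Q}
    (hX : M.IsIdentification p q X) (hXY : Relation.ReflTransGen Red1 X Y)
    (hYZ : Y.Isomorphic Z) : ∃ X', M.IsIdentification p q X' ∧ Relation.ReflTransGen Red1 X' Z := by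
  cases hXY with
  | refl => exact ⟨Z, hX.of_isomorphic hYZ, .refl⟩
  | tail hXW hWY =>
    obtain ⟨P, Q, R, a, hPQ, hP, hQ, hid⟩ := hWY
    exact ⟨X, hX, hXW.tail ⟨P, Q, R, a, hPQ, hP, hQ, hid.of_isomorphic hYZ⟩⟩

structure FoldPresentation (M : Autom A) (p q : M.Q) (X : Autom A) (ψ : M.Q → X.Q) : Prop
    extends IsQuotientMap M X ψ where
  map_eq : ψ p = ψ q
  fold_of_map_eq : ∀ ⦃x y⦄, ψ x = ψ y → Fold M p q x y

namespace FoldPresentation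

variable {M X Y : Autom A} {p q : M.Q} {ψ : M.Q → X.Q}

theorem of_isIdentification {φ : M.Q → X.Q} (hφ : IsQuotientMap M X φ)
    (hker : ∀ x y, φ x = φ y ↔ x = y ∨ (x = p ∧ y = q) ∨ (x = q ∧ y = p)) :
    FoldPresentation M p q X φ := by
  refine ⟨hφ, (hker p q).mpr (Or.inr (Or.inl ⟨rfl, rfl⟩)), fun x y h => ?_⟩
  rcases (hker x y).mp h with rfl | ⟨rfl, rfl⟩ | ⟨rfl, rfl⟩
  exacts [Fold.refl x, Fold.base, Fold.base.symm]

theorem exists_fold_of_mem_E (hψ : FoldPresentation M p q X ψ) {R P Q : X.Q} {a : Ltr A}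
    (hP : (R, a, P) ∈ X.E) (hQ : (R, a, Q) ∈ X.E) :
    ∃ x y, ψ x = P ∧ ψ y = Q ∧ Fold M p q x y := by
  obtain ⟨⟨r₁, b, x⟩, hx, hPe⟩ := (hψ.mem_E_iff _).mp hP
  obtain ⟨⟨r₂, c, y⟩, hy, hQe⟩ := (hψ.mem_E_iff _).mp hQ
  simp only [Prod.mk.injEq] at hPe hQe
  obtain ⟨hR₁, rfl, rfl⟩ := hPe
  obtain ⟨hR₂, rfl, rfl⟩ := hQe
  exact ⟨x, y, rfl, rfl, Fold.fold (hψ.fold_of_map_eq (hR₁.symm.trans hR₂)) hx hy⟩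

theorem comp (hψ : FoldPresentation M p q X ψ) {R P Q : X.Q} {a : Ltr A}
    (hP : (R, a, P) ∈ X.E) (hQ : (R, a, Q) ∈ X.E) {φ : X.Q → Y.Q} (hφ : IsQuotientMap X Y φ)
    (hker : ∀ u v, φ u = φ v ↔ u = v ∨ (u = P ∧ v = Q) ∨ (u = Q ∧ v = P)) :
    FoldPresentation M p q Y (φ ∘ ψ) := by
  refine ⟨hψ.toIsQuotientMap.comp hφ, congrArg φ hψ.map_eq, fun x y h => ?_⟩
  obtain ⟨x₀, y₀, hx₀, hy₀, hfold⟩ := hψ.exists_fold_of_mem_E hP hQ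
  rcases (hker _ _).mp h with h | ⟨hx, hy⟩ | ⟨hx, hy⟩
  · exact hψ.fold_of_map_eq h
  · exact ((hψ.fold_of_map_eq (hx.trans hx₀.symm)).trans hfold).trans
      (hψ.fold_of_map_eq (hy₀.trans hy.symm))
  · exact ((hψ.fold_of_map_eq (hx.trans hy₀.symm)).trans hfold.symm).trans
      (hψ.fold_of_map_eq (hx₀.trans hy.symm))

theorem map_eq_iff_fold (hψ : FoldPresentation M p q X ψ) (hdet : X.Deterministic) (x y : M.Q) :
    ψ x = ψ y ↔ Fold M p q x y := by
  refine ⟨fun h => hψ.fold_of_map_eq h, fun h => ?_⟩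
  refine Fold.le_of_foldClosed (r := fun x y => ψ x = ψ y) ⟨fun _ => rfl, Eq.symm, Eq.trans⟩
    hψ.map_eq (fun r₁ r₂ x y a hr hx hy => ?_) x y h
  exact hdet _ _ _ _ (hψ.map_mem_E hx) (hr ▸ hψ.map_mem_E hy)

end FoldPresentation

theorem exists_foldPresentation_of_red1_chain {M X Y : Autom A} {p q : M.Q}
    (hX : M.IsIdentification p q X) (hXY : Relation.ReflTransGen Red1 X Y) :
    ∃ ψ, FoldPresentation M p q Y ψ ∧ (offDiagDom fun x y => ψ x = ψ y).Finite := by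
  induction hXY with
  | refl =>
    obtain ⟨φ, hφ, hker⟩ := isIdentification_iff.mp hX
    refine ⟨φ, .of_isIdentification hφ hker, (Set.toFinite {p, q}).subset ?_⟩
    rintro x ⟨y, hxy, hne⟩
    rcases (hker x y).mp hxy with h | ⟨rfl, -⟩ | ⟨rfl, -⟩
    exacts [absurd h hne, Or.inl rfl, Or.inr rfl]
  | tail _ hstep ih =>
    obtain ⟨ψ, hψ, hfin⟩ := ih
    obtain ⟨P, Q, R, a, -, hP, hQ, hid⟩ := hstep
    obtain ⟨φ, hφ, hker⟩ := isIdentification_iff.mp hid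
    exact ⟨φ ∘ ψ, hψ.comp hP hQ hφ hker, hfin.offDiagDom_comp fun u v => (hker u v).mp⟩

theorem exists_red1_chain_deterministic {M X : Autom A} {p q : M.Q} {ψ : M.Q → X.Q}
    (hfin : (offDiagDom (Fold M p q)).Finite) (hψ : FoldPresentation M p q X ψ) :
    ∃ (Y : Autom A) (χ : M.Q → Y.Q), Relation.ReflTransGen Red1 X Y ∧ Y.Deterministic ∧
      FoldPresentation M p q Y χ := by
  induction hn : (ψ '' offDiagDom (Fold M p q)).ncard using Nat.strong_induction_on
    generalizing X with
  | _ n ih =>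
    by_cases hdet : X.Deterministic
    · exact ⟨X, ψ, .refl, hdet, hψ⟩
    simp only [Deterministic, not_forall] at hdet
    obtain ⟨R, a, P, Q, hP, hQ, hPQ⟩ := hdet
    obtain ⟨Y, hY⟩ := exists_isIdentification X P Q
    obtain ⟨φ, hφ, hker⟩ := isIdentification_iff.mp hY
    -- `P ≠ Q` are images of `Fold`-related states, and `φ` merges them
    have hlt : ((φ ∘ ψ) '' offDiagDom (Fold M p q)).ncard < n := by
      obtain ⟨x, y, rfl, rfl, hxy⟩ := hψ.exists_fold_of_mem_E hP hQ
      have hne : x ≠ y := by rintro rfl; exact hPQ rfl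
      rw [Set.image_comp, ← hn]
      refine Set.ncard_image_lt_of_not_injOn (hfin.image ψ) fun hinj => hPQ (hinj ?_ ?_ ?_)
      · exact ⟨x, ⟨y, hxy, hne⟩, rfl⟩
      · exact ⟨y, ⟨x, hxy.symm, hne.symm⟩, rfl⟩
      · exact (hker _ _).mpr (Or.inr (Or.inl ⟨rfl, rfl⟩))
    obtain ⟨Z, χ, hYZ, hdetZ, hχ⟩ := ih _ hlt (hψ.comp hP hQ hφ hker) rfl
    exact ⟨Z, χ, .head ⟨P, Q, R, a, hPQ, hP, hQ, hY⟩ hYZ, hdetZ, hχ⟩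

theorem IStep.of_fold_eq {M N : Autom A} {p q p' q' : M.Q}
    (hfold : Fold M p q = Fold M p' q') (hpq' : p' ≠ q') (h : M.IStep p q N) :
    M.IStep p' q' N := by
  obtain ⟨-, X, N'', hX, ⟨M₁, hXM₁, hdet, hM₁N'', hterm⟩, hN''⟩ := h
  obtain ⟨ψ, hψ, hfin⟩ := exists_foldPresentation_of_red1_chain hX hXM₁
  have hker : (fun x y => ψ x = ψ y) = Fold M p' q' := by
    rw [← hfold]; ext x y; exact hψ.map_eq_iff_fold hdet x y
  obtain ⟨X', hX'⟩ := exists_isIdentification M p' q'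
  obtain ⟨φ, hφ, hφker⟩ := isIdentification_iff.mp hX'
  obtain ⟨Y, χ, hX'Y, hdetY, hχ⟩ :=
    exists_red1_chain_deterministic (hker ▸ hfin) (.of_isIdentification hφ hφker)
  have hYM₁ : Y.Isomorphic M₁ := hχ.isomorphic hψ.toIsQuotientMap fun x y => by
    rw [hχ.map_eq_iff_fold hdetY, ← hker]
  obtain ⟨X'', hX'', hX''M₁⟩ := exists_isIdentification_red1_chain_of_isomorphic hX' hX'Y hYM₁
  exact ⟨hpq', X'', N'', hX'', ⟨M₁, hX''M₁, hdet, hM₁N'', hterm⟩, hN''⟩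

end Autom

theorem istep_transport_general
    {A : Type} (M : Autom A) (hMinv : M.IsInv)
    (u : List (Ltr A))
    (p p' q q' : M.Q) (h1 : M.Path p u p') (h2 : M.Path q u q')
    (hpq : p ≠ q) (hpq' : p' ≠ q')
    (N : Autom A) :
    M.IStep p q N ↔ M.IStep p' q' N := by
  have hfold := Autom.fold_eq_of_paths hMinv.2.2 h1 h2
  exact ⟨Autom.IStep.of_fold_eq hfold hpq', Autom.IStep.of_fold_eq hfold.symm hpq⟩

/-- Fact 2.1: if a reduced word `u` labels paths `p → p'` and `q → q'` in a reduced
inverse automaton, then the i-step identifying `p` and `q` and the i-step identifying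
`p'` and `q'` produce the same result. -/
theorem istep_transport
    {A : Type} (M : Autom A) (hMinv : M.IsInv) (hMred : M.IsRed)
    (u : List (Ltr A)) (hured : IsReducedWord u)
    (p p' q q' : M.Q) (h1 : M.Path p u p') (h2 : M.Path q u q')
    (hpq : p ≠ q) (hpq' : p' ≠ q')
    (N : Autom A) (hNinv : N.IsInv) (hNred : N.IsRed) :
    M.IStep p q N ↔ M.IStep p' q' N :=
  istep_transport_general M hMinv u p p' q q' h1 h2 hpq hpq' N
end
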